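/- The neighborhood subgraph of the vertex (0,0) in the 4×4 rook's graph is not isomorphic to the neighborhood subgraph of the vertex (0,0) in the Shrikhande graph. -/

import Mathlib

/-!
In the rook's graph the neighbourhood of a vertex is two disjoint triangles (the rest of its row
and of its column), while in the Shrikhande graph it is a hexagon. So the first contains a
triangle and the second is triangle-free, and triangle-freeness transfers along isomorphisms.
-/

/-- The 4×4 rook's graph on `ZMod 4 × ZMod 4`: two distinct vertices are adjacent
iff they agree in the first coordinate or agree in the second coordinate. -/
def rookGraph : SimpleGraph (ZMod 4 × ZMod 4) where
  Adj u v := u ≠ v ∧ (u.1 = v.1 ∨ u.2 = v.2)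
  symm := by
    constructor
    rintro u v ⟨hne, h⟩
    exact ⟨hne.symm, by tauto⟩
  loopless := by
    constructor
    rintro u ⟨hne, -⟩
    exact hne rfl

/-- The connection set of the Shrikhande graph. -/
def shrikhandeSet : Finset (ZMod 4 × ZMod 4) :=
  {(1, 0), (3, 0), (0, 1), (0, 3), (1, 1), (3, 3)}

/-- The Shrikhande graph on `ZMod 4 × ZMod 4`: `u` and `v` are adjacent iff
`u - v` lies in the set {(1,0),(3,0),(0,1),(0,3),(1,1),(3,3)}. -/
def shrikhandeGraph : SimpleGraph (ZMod 4 × ZMod 4) where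
  Adj u v := u - v ∈ shrikhandeSet
  symm := by
    constructor
    intro u v h
    have key : ∀ w : ZMod 4 × ZMod 4, w ∈ shrikhandeSet → -w ∈ shrikhandeSet := by decide
    have := key _ h
    rwa [neg_sub] at this
  loopless := by
    constructor
    intro u h
    rw [sub_self] at h
    revert h
    decide

lemma rookGraph_adj_of_fst_eq {a b c : ZMod 4} (h : b ≠ c) : rookGraph.Adj (a, b) (a, c) :=
  ⟨fun e ↦ h (Prod.ext_iff.1 e).2, Or.inl rfl⟩

theorem rookGraph_neighborhood_not_cliqueFree_three (w : ZMod 4 × ZMod 4) :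
    ¬ (rookGraph.induce (rookGraph.neighborSet w)).CliqueFree 3 := by
  obtain ⟨a, b⟩ := w
  have hne : ∀ k l : ZMod 4, k ≠ l → b + k ≠ b + l := fun k l h e ↦ h (add_left_cancel e)
  let row (k : ZMod 4) (hk : k ≠ 0) : rookGraph.neighborSet (a, b) :=
    ⟨(a, b + k), rookGraph_adj_of_fst_eq (by simpa using hne 0 k hk.symm)⟩
  intro h
  refine h {row 1 (by decide), row 2 (by decide), row 3 (by decide)} ?_
  exact SimpleGraph.is3Clique_triple_iff.2
    ⟨rookGraph_adj_of_fst_eq (hne 1 2 (by decide)), rookGraph_adj_of_fst_eq (hne 1 3 (by decide)),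
      rookGraph_adj_of_fst_eq (hne 2 3 (by decide))⟩

lemma shrikhandeSet_triangle_free : ∀ x ∈ shrikhandeSet, ∀ y ∈ shrikhandeSet, ∀ z ∈ shrikhandeSet,
    y - x ∈ shrikhandeSet → z - y ∈ shrikhandeSet → z - x ∉ shrikhandeSet := by
  decide

theorem shrikhandeGraph_neighborhood_cliqueFree_three (w : ZMod 4 × ZMod 4) :
    (shrikhandeGraph.induce (shrikhandeGraph.neighborSet w)).CliqueFree 3 := by
  intro s hs
  obtain ⟨x, y, z, hxy, hxz, hyz, rfl⟩ := SimpleGraph.is3Clique_iff.1 hs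
  -- translating by `w` turns the neighbours of `w` into elements of the connection set
  have hdiff : ∀ u v : ZMod 4 × ZMod 4, (w - u) - (w - v) = v - u := fun u v ↦ by abel
  refine shrikhandeSet_triangle_free _ x.2 _ y.2 _ z.2 ?_ ?_ ?_
  · rw [hdiff]; exact hxy
  · rw [hdiff]; exact hyz
  · rw [hdiff]; exact hxz

/-- The neighborhood subgraph of (0,0) in the 4×4 rook's graph is not isomorphic to
the neighborhood subgraph of (0,0) in the Shrikhande graph. -/
theorem rookGraph_neighborhood_not_iso_shrikhandeGraph_neighborhood :
    ¬ Nonempty ((rookGraph.induce (rookGraph.neighborSet (0, 0))) ≃g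
      (shrikhandeGraph.induce (shrikhandeGraph.neighborSet (0, 0)))) := by
  rintro ⟨e⟩
  exact rookGraph_neighborhood_not_cliqueFree_three _
    ((shrikhandeGraph_neighborhood_cliqueFree_three _).comap e.isContained)
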